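/- For a in (0,π/4), let β = √(1-tan²a). Then (2/π)·(2-β²)^{3/2}/β² · (K(β) - 2E(β)/(2-β²)) - √((1-β²)(2-β²))/β² · (K(β) - 2E(β)/(2-β²)) > 0; equivalently, (√(2-β²)/β²)·(K(β) - 2E(β)/(2-β²))·((2/π)(2-β²) - √(1-β²)) > 0. -/

import Mathlib

open Real Set

noncomputable def ellK (k : ℝ) : ℝ :=
  ∫ θ in (0:ℝ)..(Real.pi/2), 1 / Real.sqrt (1 - k^2 * Real.sin θ ^ 2)

noncomputable def ellE (k : ℝ) : ℝ :=
  ∫ θ in (0:ℝ)..(Real.pi/2), Real.sqrt (1 - k^2 * Real.sin θ ^ 2)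

/-!
With `Δ θ = √(1 - k² sin² θ)`, the identity `(2 - k²) / Δ - 2 Δ = k² (sin² θ - cos² θ) / Δ`
writes `(2 - k²) K(k) - 2 E(k)` as the integral of a function that changes sign at `π / 4`.
Folding `[0, π / 4]` onto `[π / 4, π / 2]` by `θ ↦ π / 2 - θ` pairs `k² (s² - c²) / √(1 - k² s²)`
with `k² (c² - s²) / √(1 - k² c²)`; for `θ ∈ (π / 4, π / 2)` we have `s > c`, so the first
denominator is the smaller one and the pair sums to a positive number. For the second factor,
`t = √(1 - β²) = tan a` and `π t < 4 t ≤ 2 (1 + t²)`.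
-/

theorem intervalIntegral_pos_of_add_comp_reflect_pos {f : ℝ → ℝ} {a b : ℝ} (hf : Continuous f)
    (hab : a < b) (hpos : ∀ x ∈ Ioo ((a + b) / 2) b, 0 < f (a + b - x) + f x) :
    0 < ∫ x in a..b, f x := by
  set m := (a + b) / 2 with hm
  have hreflect : ∫ x in a..m, f x = ∫ x in m..b, f (a + b - x) := by
    rw [intervalIntegral.integral_comp_sub_left f (a + b)]
    congr 1 <;> ring
  have hcomp : Continuous fun x => f (a + b - x) := hf.comp (continuous_const.sub continuous_id)
  rw [← intervalIntegral.integral_add_adjacent_intervals (hf.intervalIntegrable a m)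
      (hf.intervalIntegrable m b), hreflect,
    ← intervalIntegral.integral_add (hcomp.intervalIntegrable _ _) (hf.intervalIntegrable _ _)]
  exact intervalIntegral.intervalIntegral_pos_of_pos_on
    ((hcomp.add hf).intervalIntegrable _ _) hpos (by linarith [hm])

theorem one_sub_sq_mul_sin_sq_pos {k : ℝ} (hk : k ^ 2 < 1) (θ : ℝ) :
    0 < 1 - k ^ 2 * sin θ ^ 2 := by
  nlinarith [sin_sq_le_one θ, mul_le_mul_of_nonneg_left (sin_sq_le_one θ) (sq_nonneg k)]

theorem two_sub_sq_mul_ellK_sub_two_mul_ellE {k : ℝ} (hk : k ^ 2 < 1) :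
    (2 - k ^ 2) * ellK k - 2 * ellE k =
      ∫ θ in (0:ℝ)..(π / 2), k ^ 2 * (sin θ ^ 2 - cos θ ^ 2) / √(1 - k ^ 2 * sin θ ^ 2) := by
  have hΔ : Continuous fun θ => √(1 - k ^ 2 * sin θ ^ 2) := by fun_prop
  have hΔne θ : √(1 - k ^ 2 * sin θ ^ 2) ≠ 0 :=
    (sqrt_pos.mpr (one_sub_sq_mul_sin_sq_pos hk θ)).ne'
  have hinv : Continuous fun θ => 1 / √(1 - k ^ 2 * sin θ ^ 2) := continuous_const.div hΔ hΔne
  calc (2 - k ^ 2) * ellK k - 2 * ellE k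
      = ∫ θ in (0:ℝ)..(π / 2), ((2 - k ^ 2) * (1 / √(1 - k ^ 2 * sin θ ^ 2))
          - 2 * √(1 - k ^ 2 * sin θ ^ 2)) := by
        have hK : Continuous fun θ => (2 - k ^ 2) * (1 / √(1 - k ^ 2 * sin θ ^ 2)) :=
          continuous_const.mul hinv
        have hE : Continuous fun θ => 2 * √(1 - k ^ 2 * sin θ ^ 2) := continuous_const.mul hΔ
        rw [intervalIntegral.integral_sub (hK.intervalIntegrable _ _) (hE.intervalIntegrable _ _),
          intervalIntegral.integral_const_mul, intervalIntegral.integral_const_mul, ellK, ellE]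
    _ = _ := intervalIntegral.integral_congr fun θ _ => by
        have hsq := sq_sqrt (one_sub_sq_mul_sin_sq_pos hk θ).le
        field_simp [hΔne θ]
        linear_combination (-2) * hsq + k ^ 2 * sin_sq_add_cos_sq θ

theorem div_sqrt_add_div_sqrt_pos {k u v : ℝ} (hk : k ≠ 0) (hu : k ^ 2 * u < 1) (hvu : v < u) :
    0 < k ^ 2 * (u - v) / √(1 - k ^ 2 * u) + k ^ 2 * (v - u) / √(1 - k ^ 2 * v) := by
  have hnum : 0 < k ^ 2 * (u - v) := mul_pos (by positivity) (by linarith)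
  have hA : 0 < √(1 - k ^ 2 * u) := sqrt_pos.mpr (by linarith)
  have hAB : √(1 - k ^ 2 * u) < √(1 - k ^ 2 * v) := sqrt_lt_sqrt (by linarith) (by nlinarith)
  rw [show k ^ 2 * (v - u) = -(k ^ 2 * (u - v)) by ring, neg_div, ← sub_eq_add_neg, sub_pos]
  exact div_lt_div_of_pos_left hnum hA hAB

theorem two_mul_ellE_lt_two_sub_sq_mul_ellK {k : ℝ} (hk0 : k ≠ 0) (hk1 : k ^ 2 < 1) :
    2 * ellE k < (2 - k ^ 2) * ellK k := by
  rw [← sub_pos, two_sub_sq_mul_ellK_sub_two_mul_ellE hk1]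
  have hΔne θ : √(1 - k ^ 2 * sin θ ^ 2) ≠ 0 :=
    (sqrt_pos.mpr (one_sub_sq_mul_sin_sq_pos hk1 θ)).ne'
  refine intervalIntegral_pos_of_add_comp_reflect_pos
    (Continuous.div (by fun_prop) (by fun_prop) hΔne) (by positivity) fun θ ⟨hθ1, hθ2⟩ => ?_
  have hcos : 0 < cos θ := cos_pos_of_mem_Ioo ⟨by linarith [pi_pos], hθ2⟩
  have hcos_lt : cos θ < sin θ := by
    rw [← sin_pi_div_two_sub]
    exact sin_lt_sin_of_lt_of_le_pi_div_two (by linarith) hθ2.le (by linarith)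
  rw [zero_add, sin_pi_div_two_sub, cos_pi_div_two_sub, add_comm]
  exact div_sqrt_add_div_sqrt_pos hk0 (by nlinarith [sin_sq_le_one θ]) (by nlinarith)

theorem sqrt_one_sub_sq_lt_two_div_pi_mul {β : ℝ} (hβ : β ^ 2 ≤ 1) :
    √(1 - β ^ 2) < 2 / π * (2 - β ^ 2) := by
  set t := √(1 - β ^ 2)
  have ht : t ^ 2 = 1 - β ^ 2 := sq_sqrt (by linarith)
  rw [show 2 - β ^ 2 = 1 + t ^ 2 by linarith, div_mul_eq_mul_div, lt_div_iff₀ pi_pos]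
  nlinarith [pi_lt_d2, sq_nonneg (1 - t), sqrt_nonneg (1 - β ^ 2)]

theorem stmt10 : ∀ a ∈ Ioo (0:ℝ) (Real.pi/4),
    ∀ β : ℝ, β = Real.sqrt (1 - Real.tan a ^ 2) →
    (2 / Real.pi) * (2 - β^2)^((3:ℝ)/2) / β^2 * (ellK β - 2 * ellE β / (2 - β^2)) -
      Real.sqrt ((1 - β^2) * (2 - β^2)) / β^2 * (ellK β - 2 * ellE β / (2 - β^2)) > 0 ∧
    (Real.sqrt (2 - β^2) / β^2) * (ellK β - 2 * ellE β / (2 - β^2)) *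
      ((2 / Real.pi) * (2 - β^2) - Real.sqrt (1 - β^2)) > 0 := by
  rintro a ⟨ha0, ha⟩ β rfl
  have htan0 : 0 < tan a := tan_pos_of_pos_of_lt_pi_div_two ha0 (by linarith [pi_pos])
  have htan1 : tan a < 1 := by
    simpa using tan_lt_tan_of_lt_of_lt_pi_div_two (by linarith [pi_pos]) (by linarith [pi_pos]) ha
  set β := √(1 - tan a ^ 2)
  have hβsq : β ^ 2 = 1 - tan a ^ 2 := sq_sqrt (by nlinarith)
  have hβ0 : β ≠ 0 := (sqrt_pos.mpr (by nlinarith)).ne'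
  have h2β : 0 < 2 - β ^ 2 := by nlinarith
  have hKE : 0 < ellK β - 2 * ellE β / (2 - β ^ 2) := by
    rw [sub_pos, div_lt_iff₀' h2β]
    exact two_mul_ellE_lt_two_sub_sq_mul_ellK hβ0 (by nlinarith)
  have hprod : 0 < √(2 - β ^ 2) / β ^ 2 * (ellK β - 2 * ellE β / (2 - β ^ 2)) *
      (2 / π * (2 - β ^ 2) - √(1 - β ^ 2)) :=
    mul_pos (mul_pos (by positivity) hKE)
      (sub_pos.mpr (sqrt_one_sub_sq_lt_two_div_pi_mul (by nlinarith)))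
  refine ⟨?_, hprod⟩
  rw [show (3:ℝ) / 2 = 1 + 1 / 2 by norm_num, rpow_add h2β, rpow_one, ← sqrt_eq_rpow,
    sqrt_mul (by nlinarith)]
  linear_combination hprod
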